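/- There exists a constant c > 0 such that for all sufficiently large n and all integers 0 ≤ i ≤ I: (a) φ(iδ) ≤ 1 and φ(iδ) ≥ c·n^{-1.5ε}; (b) Φ(iδ) ≤ ln n; (c) if i ≥ 1 then Φ(iδ) ≥ c·n^{-ε}. -/

import Mathlib

open MeasureTheory Finset Filter

namespace TF

noncomputable section
open scoped Classical

/-- Edges of the complete graph on `Fin n` are elements of `Sym2 (Fin n)`. -/
abbrev Edge (n : ℕ) := Sym2 (Fin n)

/-- The edge set of the complete graph `K_n` (non-diagonal pairs). -/
def allEdges (n : ℕ) : Finset (Edge n) := Finset.univ.filter (fun e => ¬ e.IsDiag)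

/-- Three edges form a triangle. -/
def IsTri {n : ℕ} (e f g : Edge n) : Prop :=
  ∃ a b c : Fin n, a ≠ b ∧ b ≠ c ∧ a ≠ c ∧ e = s(a, b) ∧ f = s(b, c) ∧ g = s(a, c)

/-- An edge set is triangle-free. -/
def TriFree {n : ℕ} (T : Finset (Edge n)) : Prop :=
  ∀ e ∈ T, ∀ f ∈ T, ∀ g ∈ T, ¬ IsTri e f g

/-- Adding `e` to `T` does not create a triangle. -/
def AddOK {n : ℕ} (T : Finset (Edge n)) (e : Edge n) : Prop :=
  ∀ f ∈ T, ∀ g ∈ T, ¬ IsTri e f g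

/-- Traverse a list of edges, adding each to the current graph unless
its addition creates a triangle (or it is a loop). -/
def greedy {n : ℕ} (T : Finset (Edge n)) : List (Edge n) → Finset (Edge n)
  | [] => T
  | e :: l => if AddOK T e ∧ ¬ e.IsDiag then greedy (insert e T) l else greedy T l

/-- The edges of `s`, listed in increasing order of birthtime. -/
def sortByBirth {n : ℕ} (β : Edge n → ℝ) (s : Finset (Edge n)) : List (Edge n) :=
  s.toList.mergeSort (fun a b => β a ≤ β b)

/-- `δ := 1/⌊n^ε⌋`. -/
def del (n : ℕ) (ε : ℝ) : ℝ := 1 / (⌊(n : ℝ) ^ ε⌋₊ : ℝ)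

/-- `I := δ^{-2} = ⌊n^ε⌋²`. -/
def Inat (n : ℕ) (ε : ℝ) : ℕ := (⌊(n : ℝ) ^ ε⌋₊) ^ 2

/-- `M := n^{20000ε}`. -/
def Mc (n : ℕ) (ε : ℝ) : ℝ := (n : ℝ) ^ (20000 * ε)

/-- The imaginary error function `erfi(x) = (2/√π)∫₀ˣ exp(t²) dt`. -/
def erfi (x : ℝ) : ℝ := (2 / Real.sqrt Real.pi) * ∫ t in (0:ℝ)..x, Real.exp (t ^ 2)

/-- `Φ` is the inverse function of `y ↦ (√π/2)·erfi y`; equivalently it is the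
solution of `Φ(0) = 0`, `Φ'(x) = exp (-Φ(x)²)`. -/
def Phi : ℝ → ℝ := Function.invFun (fun y : ℝ => (Real.sqrt Real.pi / 2) * erfi y)

/-- `φ(x) := exp (-Φ(x)²)`, the derivative of `Φ`. -/
def phi (x : ℝ) : ℝ := Real.exp (-(Phi x) ^ 2)

/-- `m := ⌊n^{100ε}⌋·φ(iδ)⁻¹`. -/
def mc (n : ℕ) (ε : ℝ) (i : ℕ) : ℝ := (⌊(n : ℝ) ^ (100 * ε)⌋₊ : ℝ) * (phi (i * del n ε))⁻¹

/-- `γ(i) := max{δΦ(iδ)φ(iδ), δ²φ(iδ)²}`. -/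
def gam (n : ℕ) (ε : ℝ) (i : ℕ) : ℝ :=
  max (del n ε * Phi (i * del n ε) * phi (i * del n ε))
      (del n ε ^ 2 * phi (i * del n ε) ^ 2)

/-- `Γ(0) := n^{-30ε}`, `Γ(i) := Γ(i-1)(1 + 10γ(i-1))`. -/
def Gam (n : ℕ) (ε : ℝ) : ℕ → ℝ
  | 0 => (n : ℝ) ^ (-30 * ε)
  | i + 1 => Gam n ε i * (1 + 10 * gam n ε i)

/-- `x = a(1 ± b)`, i.e. `a(1-b) ≤ x ≤ a(1+b)`. -/
def within (x a b : ℝ) : Prop := a * (1 - b) ≤ x ∧ x ≤ a * (1 + b)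

/-- The uniform probability measure on a set of reals. -/
def unif (s : Set ℝ) : Measure ℝ := (volume s)⁻¹ • volume.restrict s

/-- The product measure under which every edge of `K_n` receives an
independent uniform birthtime in `[0,1]`. -/
def stepMeasure (n : ℕ) : Measure (Edge n → ℝ) :=
  Measure.pi fun _ => unif (Set.Icc 0 1)

/-- `Λ₀(g,i)`: pairs `{g₁,g₂} ⊆ TF_i` forming a triangle with `g`. -/
def Lam0 {n : ℕ} (TFi : Finset (Edge n)) (g : Edge n) : Finset (Finset (Edge n)) :=
  (TFi.powersetCard 2).filter
    (fun P => ∃ g1 ∈ P, ∃ g2 ∈ P, g1 ≠ g2 ∧ IsTri g g1 g2)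

/-- `Λ₁(g,i)`: singletons (identified with edges) `g₁ ∉ B_{≤i}` such that some
`g₂ ∈ TF_i` makes `{g,g₁,g₂}` a triangle and `TF_i ∪ {g₁}` is triangle-free. -/
def Lam1 {n : ℕ} (TFi Bprev : Finset (Edge n)) (g : Edge n) : Finset (Edge n) :=
  (allEdges n \ Bprev).filter
    (fun g1 => (∃ g2 ∈ TFi, IsTri g g1 g2) ∧ TriFree (insert g1 TFi))

/-- `Λ₂(g,i)`: pairs `{g₁,g₂} ⊆ K_n ∖ B_{≤i}` forming a triangle with `g`
such that `TF_i ∪ {g_j}` is triangle-free for both `j ∈ {1,2}`. -/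
def Lam2 {n : ℕ} (TFi Bprev : Finset (Edge n)) (g : Edge n) : Finset (Finset (Edge n)) :=
  ((allEdges n \ Bprev).powersetCard 2).filter
    (fun P => (∃ g1 ∈ P, ∃ g2 ∈ P, g1 ≠ g2 ∧ IsTri g g1 g2) ∧
      ∀ f ∈ P, TriFree (insert f TFi))

/-- The process is well-behaved at step `i` (the precondition of the
key lemma), for a given instance `(TF_i, B_{≤i})`. -/
def WellBehaved (n : ℕ) (ε : ℝ) (i : ℕ) (TFi Bprev : Finset (Edge n)) : Prop :=
  (∀ g ∈ allEdges n, ((Lam0 TFi g).card : ℝ) ≤ i * (n : ℝ) ^ (5 * ε) ∧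
      ((Lam1 TFi Bprev g).card : ℝ) ≤ i * Real.sqrt n) ∧
  (∀ g ∈ allEdges n \ Bprev,
    within ((Lam1 TFi Bprev g).card : ℝ)
      (2 * Real.sqrt n * Phi (i * del n ε) * phi (i * del n ε)) (Gam n ε i) ∧
    within ((Lam2 TFi Bprev g).card : ℝ)
      ((n : ℝ) * phi (i * del n ε) ^ 2) (Gam n ε i))

/-- Structural properties of any instance of the state `(TF_i, B_{≤i})` of the
process: `TF_i ⊆ B_{≤i} ⊆ K_n` and `TF_i` is triangle-free. -/
def Instance (n : ℕ) (TFi Bprev : Finset (Edge n)) : Prop :=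
  TFi ⊆ Bprev ∧ Bprev ⊆ allEdges n ∧ TriFree TFi

/-- The set `B_{i+1}` determined by the fresh birthtimes `β = β_{i+1}`. -/
def Bnext (n : ℕ) (ε : ℝ) (Bprev : Finset (Edge n)) (β : Edge n → ℝ) : Finset (Edge n) :=
  (allEdges n \ Bprev).filter (fun f => β f < del n ε * (n : ℝ) ^ (-(1:ℝ)/2))

/-- The graph `TF_{i+1}`, obtained by traversing the edges of `B_{i+1}` in
increasing order of birthtime, adding each unless a triangle is created. -/
def TFnext (n : ℕ) (ε : ℝ) (TFi Bprev : Finset (Edge n)) (β : Edge n → ℝ) : Finset (Edge n) :=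
  greedy TFi (sortByBirth β (Bnext n ε Bprev β))

/-- `B^⋆_{i+1}` as a function of the birthtimes: the edges outside `B_{≤i}`
with birthtime below `M·n^{-1/2}`. -/
def BstarOf (n : ℕ) (ε : ℝ) (Bprev : Finset (Edge n)) (β : Edge n → ℝ) : Finset (Edge n) :=
  (allEdges n \ Bprev).filter (fun f => β f < Mc n ε * (n : ℝ) ^ (-(1:ℝ)/2))

/-- `B^*_{i+1}` as a function of the birthtimes: the edges outside `B_{≤i}`
with birthtime below `m·n^{-1/2}`. -/
def BsubOf (n : ℕ) (ε : ℝ) (i : ℕ) (Bprev : Finset (Edge n)) (β : Edge n → ℝ) : Finset (Edge n) :=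
  (allEdges n \ Bprev).filter (fun f => β f < mc n ε i * (n : ℝ) ^ (-(1:ℝ)/2))

/-- `Λ^⋆₁`-type family: members of `Λ₁` contained in the selected edge set. -/
def LamS1 {n : ℕ} (TFi Bprev Bsel : Finset (Edge n)) (g : Edge n) : Finset (Edge n) :=
  (Lam1 TFi Bprev g).filter (fun e => e ∈ Bsel)

/-- `Λ^⋆₂`-type family: members of `Λ₂` contained in the selected edge set. -/
def LamS2 {n : ℕ} (TFi Bprev Bsel : Finset (Edge n)) (g : Edge n) : Finset (Finset (Edge n)) :=
  (Lam2 TFi Bprev g).filter (fun P => P ⊆ Bsel)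

/-- `Λ^{⋆⋆}₂`: members of `Λ₂` meeting the selected edge set in one edge. -/
def LamSS2 {n : ℕ} (TFi Bprev Bsel : Finset (Edge n)) (g : Edge n) : Finset (Finset (Edge n)) :=
  (Lam2 TFi Bprev g).filter (fun P => (P ∩ Bsel).card = 1)

/-- The event `E^⋆(h)`: properties P1–P4. -/
def Estar (n : ℕ) (ε : ℝ) (i : ℕ) (TFi Bprev Bstar : Finset (Edge n)) (h : ℝ) : Prop :=
  (∀ g ∈ allEdges n \ Bprev,
    within ((LamS1 TFi Bprev Bstar g).card : ℝ)
      (2 * Mc n ε * Phi (i * del n ε) * phi (i * del n ε))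
      (Gam n ε i + h * Gam n ε i * gam n ε i) ∧
    within ((LamS2 TFi Bprev Bstar g).card : ℝ)
      (Mc n ε ^ 2 * phi (i * del n ε) ^ 2)
      (Gam n ε i + h * Gam n ε i * gam n ε i) ∧
    within ((LamSS2 TFi Bprev Bstar g).card : ℝ)
      (2 * Mc n ε * Real.sqrt n * phi (i * del n ε) ^ 2)
      (Gam n ε i + h * Gam n ε i * gam n ε i)) ∧
  (∀ w x y : Fin n, w ≠ x → x ≠ y → w ≠ y →
    s(w, x) ∉ Bprev → s(x, y) ∉ Bprev →
    (((Finset.univ.filter (fun z : Fin n => z ≠ w ∧ z ≠ x ∧ z ≠ y ∧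
        s(w, z) ∈ TFi ∧ s(y, z) ∈ TFi ∧ s(x, z) ∈ Bstar)).card : ℝ) ≤ Real.log n ^ 2 ∧
     ((Finset.univ.filter (fun z : Fin n => z ≠ w ∧ z ≠ x ∧ z ≠ y ∧
        s(w, z) ∈ TFi ∧ s(x, z) ∈ Bstar ∧ s(y, z) ∈ Bstar)).card : ℝ) ≤ Real.log n ^ 2 ∧
     ((Finset.univ.filter (fun z : Fin n => z ≠ w ∧ z ≠ x ∧ z ≠ y ∧
        s(w, z) ∈ TFi ∧ s(x, z) ∉ Bprev ∧ s(y, z) ∈ Bstar)).card : ℝ) ≤ Mc n ε ^ 2)) ∧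
  (∀ x y : Fin n, x ≠ y →
    ((Finset.univ.filter (fun z : Fin n => z ≠ x ∧ z ≠ y ∧
        s(x, z) ∈ Bstar ∧ s(y, z) ∈ Bstar)).card : ℝ) ≤ 2 * Mc n ε ^ 2) ∧
  (∀ x : Fin n,
    ((Finset.univ.filter (fun y : Fin n => y ≠ x ∧ s(x, y) ∈ Bstar)).card : ℝ)
      ≤ 2 * Mc n ε * Real.sqrt n)

/-- The children (labeled by sets of edges) of a tree node labeled `g` whose
grandparent is labeled `prev`, in the tree built from the selected edge set
`Bsel` (`Bsel = B^⋆_{i+1}` gives `T^⋆`, `Bsel = B^*_{i+1}` gives `T^*`). -/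
def childSets {n : ℕ} (TFi Bprev Bsel : Finset (Edge n)) (g : Edge n) :
    Option (Edge n) → Finset (Finset (Edge n))
  | none => (LamS1 TFi Bprev Bsel g).image (fun e => {e}) ∪ LamS2 TFi Bprev Bsel g
  | some g' => ((LamS2 TFi Bprev Bsel g).filter (fun G => g' ∉ G)) ∪
      ((LamS1 TFi Bprev Bsel g).filter
        (fun e => e ≠ g' ∧ ¬ IsTri e g g')).image (fun e => {e})

/-- Survival of a tree node labeled `g` with grandparent label `prev`, when
the birthtime of the node's label is `b` and `l` further generations follow:
a non-leaf node survives iff for every child `G` all of whose edges have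
birthtime below `min{b, δn^{-1/2}}`, some child of `G` does not survive. -/
def surv (n : ℕ) (ε : ℝ) (TFi Bprev Bsel : Finset (Edge n)) (β : Edge n → ℝ) :
    ℕ → Edge n → Option (Edge n) → ℝ → Prop
  | 0, _, _, _ => True
  | l + 1, g, prev, b => ∀ G ∈ childSets TFi Bprev Bsel g prev,
      (∀ f ∈ G, β f < min b (del n ε * (n : ℝ) ^ (-(1:ℝ)/2))) →
      ∃ f ∈ G, ¬ surv n ε TFi Bprev Bsel β l f (some g) (β f)

/-- The event `A_{g,l}`: the root of `T_{g,l}` survives. -/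
def Aev (n : ℕ) (ε : ℝ) (TFi Bprev Bsel : Finset (Edge n)) (β : Edge n → ℝ)
    (l : ℕ) (g : Edge n) : Prop :=
  surv n ε TFi Bprev Bsel β l g none (β g)

/-- The event `A_{F,l} := ∩_{f ∈ F} A_{f,l}`. -/
def AevF (n : ℕ) (ε : ℝ) (TFi Bprev Bsel : Finset (Edge n)) (β : Edge n → ℝ)
    (l : ℕ) (F : Finset (Edge n)) : Prop :=
  ∀ f ∈ F, Aev n ε TFi Bprev Bsel β l f

/-- The conditional distribution of the birthtimes `β_{i+1}` given that
`B^⋆_{i+1} = Bstar` was chosen, that the edges of `F1` fall in `B_{i+1}`,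
and that the edges of `Fex` do not fall in `B_{i+1}`. -/
def condM (n : ℕ) (ε : ℝ) (Bprev Bstar F1 Fex : Finset (Edge n)) : Measure (Edge n → ℝ) :=
  Measure.pi fun e =>
    if e ∈ F1 then unif (Set.Ico 0 (del n ε * (n : ℝ) ^ (-(1:ℝ)/2)))
    else if e ∈ Fex then
      (if e ∈ Bstar then
          unif (Set.Ico (del n ε * (n : ℝ) ^ (-(1:ℝ)/2)) (Mc n ε * (n : ℝ) ^ (-(1:ℝ)/2)))
        else unif (Set.Ioc (Mc n ε * (n : ℝ) ^ (-(1:ℝ)/2)) 1))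
    else if e ∈ Bstar then unif (Set.Ico 0 (Mc n ε * (n : ℝ) ^ (-(1:ℝ)/2)))
    else if e ∈ Bprev then unif (Set.Icc 0 1)
    else unif (Set.Ioc (Mc n ε * (n : ℝ) ^ (-(1:ℝ)/2)) 1)

/-- As `condM`, but additionally given that `B^*_{i+1} = Bsub` was chosen. -/
def condM2 (n : ℕ) (ε : ℝ) (i : ℕ) (Bprev Bstar Bsub F1 Fex : Finset (Edge n)) :
    Measure (Edge n → ℝ) :=
  Measure.pi fun e =>
    if e ∈ F1 then unif (Set.Ico 0 (del n ε * (n : ℝ) ^ (-(1:ℝ)/2)))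
    else if e ∈ Fex then
      (if e ∈ Bsub then
          unif (Set.Ico (del n ε * (n : ℝ) ^ (-(1:ℝ)/2)) (mc n ε i * (n : ℝ) ^ (-(1:ℝ)/2)))
        else if e ∈ Bstar then
          unif (Set.Ico (mc n ε i * (n : ℝ) ^ (-(1:ℝ)/2)) (Mc n ε * (n : ℝ) ^ (-(1:ℝ)/2)))
        else unif (Set.Ioc (Mc n ε * (n : ℝ) ^ (-(1:ℝ)/2)) 1))
    else if e ∈ Bsub then unif (Set.Ico 0 (mc n ε i * (n : ℝ) ^ (-(1:ℝ)/2)))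
    else if e ∈ Bstar then
      unif (Set.Ico (mc n ε i * (n : ℝ) ^ (-(1:ℝ)/2)) (Mc n ε * (n : ℝ) ^ (-(1:ℝ)/2)))
    else if e ∈ Bprev then unif (Set.Icc 0 1)
    else unif (Set.Ioc (Mc n ε * (n : ℝ) ^ (-(1:ℝ)/2)) 1)

/-- A descending path of labels from a (root) node labeled `g` whose
grandparent label is `prev`: each step records the label of a set-node
together with the label of one of its edge-children. -/
def chain {n : ℕ} (TFi Bprev Bsel : Finset (Edge n)) :
    Edge n → Option (Edge n) → List (Finset (Edge n) × Edge n) → Prop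
  | _, _, [] => True
  | g, prev, (G, g') :: rest =>
      G ∈ childSets TFi Bprev Bsel g prev ∧ g' ∈ G ∧ chain TFi Bprev Bsel g' (some g) rest

/-- The (edge) label of the node-at-even-distance reached by a path. -/
def lbl {n : ℕ} (f : Edge n) (path : List (Finset (Edge n) × Edge n)) : Edge n :=
  (path.map Prod.snd).getLastD f

/-- The label of the grandparent of the node reached by a path. -/
def prevLbl {n : ℕ} (f : Edge n) (path : List (Finset (Edge n) × Edge n)) : Option (Edge n) :=
  if path.isEmpty then none else some (lbl f path.dropLast)

/-- The event `E^*_F`: an edge labeling a node at even distance from the root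
of a tree of `T^*_{F,L}` labels no other such node. -/
def EstarF (n : ℕ) (TFi Bprev Bsub : Finset (Edge n)) (L : ℕ) (F : Finset (Edge n)) : Prop :=
  ∀ f ∈ F, ∀ f' ∈ F, ∀ path path' : List (Finset (Edge n) × Edge n),
    chain TFi Bprev Bsub f none path → chain TFi Bprev Bsub f' none path' →
    path.length ≤ L → path'.length ≤ L →
    lbl f path = lbl f' path' → f = f' ∧ path = path'

/-- The event `E^*`. -/
def EstarSub (n : ℕ) (ε : ℝ) (i : ℕ) (TFi Bprev Bsub : Finset (Edge n)) : Prop :=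
  ∀ g ∈ allEdges n \ Bprev,
    within ((LamS1 TFi Bprev Bsub g).card : ℝ)
      (2 * mc n ε i * Phi (i * del n ε) * phi (i * del n ε)) (1.01 * Gam n ε i) ∧
    within ((LamS2 TFi Bprev Bsub g).card : ℝ)
      (mc n ε i ^ 2 * phi (i * del n ε) ^ 2) (1.01 * Gam n ε i)

/-- The iterates `p_l` of the limiting survival recursion (with `c1 = φ(iδ)`
and `c2 = Φ(iδ)`): `p₀ ≡ 1` and
`p_{l+1}(x) = exp(-P_l(x)²c₁² - 2P_l(x)c₂c₁)` where `P_l(x) := ∫₀ˣ p_l`. -/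
def plim (c1 c2 : ℝ) : ℕ → ℝ → ℝ
  | 0 => fun _ => 1
  | l + 1 => fun x =>
      Real.exp (-(∫ y in (0:ℝ)..x, plim c1 c2 l y) ^ 2 * c1 ^ 2 -
        2 * (∫ y in (0:ℝ)..x, plim c1 c2 l y) * c2 * c1)

/-- The staged triangle-free process: `stage i = (TF_i, B_{≤i})`. -/
def stage (n : ℕ) (ε : ℝ) (β : ℕ → Edge n → ℝ) : ℕ → Finset (Edge n) × Finset (Edge n)
  | 0 => (∅, ∅)
  | i + 1 =>
      let p := stage n ε β i
      (TFnext n ε p.1 p.2 (β (i + 1)), p.2 ∪ Bnext n ε p.2 (β (i + 1)))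

/-- The sample space for the stages `0,…,I` of the process: independent
uniform birthtimes in `[0,1]` for every stage and every edge. -/
def stagesMeasure (n : ℕ) (ε : ℝ) : Measure (Fin (Inat n ε + 1) → Edge n → ℝ) :=
  Measure.pi fun _ => stepMeasure n

/-- Extend a finitely-indexed family of birthtimes to all stages. -/
def extendB (n : ℕ) (ε : ℝ) (ω : Fin (Inat n ε + 1) → Edge n → ℝ) : ℕ → Edge n → ℝ :=
  fun k => if h : k < Inat n ε + 1 then ω ⟨k, h⟩ else fun _ => 0

/-- `TF_I` as a function of the birthtimes. -/
def TFI (n : ℕ) (ε : ℝ) (ω : Fin (Inat n ε + 1) → Edge n → ℝ) : Finset (Edge n) :=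
  (stage n ε (extendB n ε ω) (Inat n ε)).1

/-- The final graph `TF(n)` of the (one-shot) triangle-free process. -/
def TFone (n : ℕ) (β : Edge n → ℝ) : Finset (Edge n) :=
  greedy ∅ (sortByBirth β (allEdges n))

/-- `TF(n,p) := TF(n) ∩ {f : β(f) ≤ p}`. -/
def TFnp (n : ℕ) (β : Edge n → ℝ) (p : ℝ) : Finset (Edge n) :=
  (TFone n β).filter (fun f => β f ≤ p)

/-- `Fn` is a copy of the graph `F` inside `K_n`. -/
def IsCopy {V : Type*} (F : SimpleGraph V) {n : ℕ} (Fn : Finset (Edge n)) : Prop :=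
  ∃ φ : V → Fin n, Function.Injective φ ∧
    (∀ e, e ∈ Fn ↔ ∃ a b, F.Adj a b ∧ e = s(φ a, φ b))

/-- The number of copies of `F` in the graph on `Fin n` with edge set `T`
(= #{injective adjacency-preserving maps} / #{automorphisms of F}). -/
def numCopies {V : Type*} [Fintype V] (F : SimpleGraph V) {n : ℕ} (T : Finset (Edge n)) : ℝ :=
  (Nat.card {φ : V → Fin n // Function.Injective φ ∧
      ∀ a b, F.Adj a b → s(φ a, φ b) ∈ T} : ℝ) / (Nat.card (F ≃g F) : ℝ)

/-- The number of edges `e_F` of a graph `F`. -/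
def eCard {V : Type*} (F : SimpleGraph V) : ℕ := Nat.card F.edgeSet

/-- `F` is balanced: `e_F/v_F ≥ e_H/v_H` for every subgraph `H ⊆ F`
with at least one vertex. -/
def Balanced {V : Type*} [Fintype V] (F : SimpleGraph V) : Prop :=
  ∀ H : F.Subgraph, H.verts.Nonempty →
    (Nat.card H.edgeSet : ℝ) / (Nat.card H.verts : ℝ) ≤
      (eCard F : ℝ) / (Fintype.card V : ℝ)

end

end TF

/-!
`Φ` inverts `F(y) = ∫₀ʸ exp(t²) dt`, and on `y ≥ 0` the function `F` is squeezed between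
`exp((y - 1)²)` (for `y ≥ 1`) and `y·exp(y²)`. Since `iδ ≤ ⌊n^ε⌋ ≤ n^ε`, the lower bound on `F`
gives `Φ(iδ) ≤ 1 + √(ε ln n)`, which for `ε ln n ≥ 16` is at most `ε ln n` and makes
`Φ(iδ)² ≤ 1 + 1.5 ε ln n`. The upper bound on `F` gives `Φ(x) ≥ x/e` for `x ≤ 1`, so by
monotonicity `Φ(iδ) ≥ Φ(δ) ≥ δ/e ≥ n^{-ε}/e` for `i ≥ 1`. Hence `c = 1/e` works for
`n ≥ e^{16/ε}`.
-/

open Real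

namespace TF

noncomputable def expSqIntegral (y : ℝ) : ℝ := ∫ t in (0 : ℝ)..y, exp (t ^ 2)

lemma continuous_exp_sq : Continuous fun t : ℝ => exp (t ^ 2) := by fun_prop

lemma intervalIntegrable_exp_sq (a b : ℝ) :
    IntervalIntegrable (fun t : ℝ => exp (t ^ 2)) volume a b :=
  continuous_exp_sq.intervalIntegrable a b

lemma expSqIntegral_zero : expSqIntegral 0 = 0 := intervalIntegral.integral_same

lemma continuous_expSqIntegral : Continuous expSqIntegral :=
  intervalIntegral.continuous_primitive intervalIntegrable_exp_sq 0

lemma expSqIntegral_add_integral (a b : ℝ) :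
    expSqIntegral a + ∫ t in a..b, exp (t ^ 2) = expSqIntegral b :=
  intervalIntegral.integral_add_adjacent_intervals (intervalIntegrable_exp_sq 0 a)
    (intervalIntegrable_exp_sq a b)

lemma strictMono_expSqIntegral : StrictMono expSqIntegral := by
  intro a b hab
  rw [← expSqIntegral_add_integral a b, lt_add_iff_pos_right]
  exact intervalIntegral.intervalIntegral_pos_of_pos_on (intervalIntegrable_exp_sq a b)
    (fun x _ => exp_pos _) hab

lemma le_expSqIntegral {y : ℝ} (hy : 0 ≤ y) : y ≤ expSqIntegral y := by
  simpa [expSqIntegral] using intervalIntegral.integral_mono_on hy intervalIntegrable_const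
    (intervalIntegrable_exp_sq 0 y) (fun x _ => one_le_exp (sq_nonneg x))

lemma expSqIntegral_le {y : ℝ} (hy : 0 ≤ y) : expSqIntegral y ≤ y * exp (y ^ 2) := by
  simpa [expSqIntegral] using intervalIntegral.integral_mono_on hy (intervalIntegrable_exp_sq 0 y)
    intervalIntegrable_const (fun x hx => exp_le_exp.2 (pow_le_pow_left₀ hx.1 hx.2 2))

lemma exp_sub_one_sq_le_expSqIntegral {y : ℝ} (hy : 1 ≤ y) :
    exp ((y - 1) ^ 2) ≤ expSqIntegral y := by
  have h_head : 0 ≤ expSqIntegral (y - 1) := (le_expSqIntegral (by linarith)).trans' (by linarith)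
  have h_tail : exp ((y - 1) ^ 2) ≤ ∫ t in (y - 1)..y, exp (t ^ 2) := by
    simpa using intervalIntegral.integral_mono_on (by linarith) intervalIntegrable_const
      (intervalIntegrable_exp_sq (y - 1) y)
      (fun x hx => exp_le_exp.2 (pow_le_pow_left₀ (by linarith [hx.1]) hx.1 2))
  rw [← expSqIntegral_add_integral (y - 1) y]
  linarith

lemma sqrt_pi_div_two_mul_erfi : (fun y => √π / 2 * erfi y) = expSqIntegral := by
  funext y
  have hπ : √π ≠ 0 := (sqrt_pos.2 pi_pos).ne'
  simp only [erfi, expSqIntegral]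
  field_simp

lemma Phi_eq_invFun : Phi = Function.invFun expSqIntegral := by
  rw [Phi, sqrt_pi_div_two_mul_erfi]

lemma expSqIntegral_Phi {x : ℝ} (hx : 0 ≤ x) : expSqIntegral (Phi x) = x := by
  rw [Phi_eq_invFun]
  apply Function.invFun_eq
  obtain ⟨y, -, hy⟩ := intermediate_value_Icc hx continuous_expSqIntegral.continuousOn
    ⟨expSqIntegral_zero.le.trans hx, le_expSqIntegral hx⟩
  exact ⟨y, hy⟩

lemma Phi_expSqIntegral (y : ℝ) : Phi (expSqIntegral y) = y := by
  rw [Phi_eq_invFun]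
  exact Function.leftInverse_invFun strictMono_expSqIntegral.injective y

lemma Phi_le_Phi {x y : ℝ} (hx : 0 ≤ x) (hxy : x ≤ y) : Phi x ≤ Phi y := by
  rw [← strictMono_expSqIntegral.le_iff_le, expSqIntegral_Phi hx,
    expSqIntegral_Phi (hx.trans hxy)]
  exact hxy

lemma Phi_zero : Phi 0 = 0 := by
  simpa [expSqIntegral_zero] using Phi_expSqIntegral 0

lemma Phi_nonneg {x : ℝ} (hx : 0 ≤ x) : 0 ≤ Phi x :=
  Phi_zero ▸ Phi_le_Phi le_rfl hx

lemma Phi_le_self {x : ℝ} (hx : 0 ≤ x) : Phi x ≤ x := by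
  simpa [expSqIntegral_Phi hx] using le_expSqIntegral (Phi_nonneg hx)

lemma exp_neg_one_mul_le_Phi {x : ℝ} (hx0 : 0 ≤ x) (hx1 : x ≤ 1) : exp (-1) * x ≤ Phi x := by
  set y := Phi x
  have hy0 : 0 ≤ y := Phi_nonneg hx0
  have hy1 : y ≤ 1 := (Phi_le_self hx0).trans hx1
  have hx : x ≤ y * exp 1 := by
    calc x = expSqIntegral y := (expSqIntegral_Phi hx0).symm
      _ ≤ y * exp (y ^ 2) := expSqIntegral_le hy0
      _ ≤ y * exp 1 := by gcongr; nlinarith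
  calc exp (-1) * x ≤ exp (-1) * (y * exp 1) := by gcongr
    _ = y := by rw [mul_left_comm, ← exp_add]; simp

lemma Phi_le_one_add_sqrt {x a : ℝ} (hx0 : 0 ≤ x) (hx : x ≤ exp a) : Phi x ≤ 1 + √a := by
  rcases le_or_gt (Phi x) 1 with h | h
  · linarith [sqrt_nonneg a]
  have hsq : (Phi x - 1) ^ 2 ≤ a := by
    rw [← exp_le_exp]
    calc exp ((Phi x - 1) ^ 2) ≤ expSqIntegral (Phi x) := exp_sub_one_sq_le_expSqIntegral h.le
      _ = x := expSqIntegral_Phi hx0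
      _ ≤ exp a := hx
  linarith [le_sqrt_of_sq_le hsq]

lemma Phi_sq_le {x a : ℝ} (ha : 16 ≤ a) (hx0 : 0 ≤ x) (hx : x ≤ exp a) :
    Phi x ^ 2 ≤ 1 + 3 / 2 * a := by
  have hs : √a ^ 2 = a := sq_sqrt (by linarith)
  have h4 : 4 ≤ √a := le_sqrt_of_sq_le (by linarith)
  have h := pow_le_pow_left₀ (Phi_nonneg hx0) (Phi_le_one_add_sqrt hx0 hx) 2
  nlinarith

lemma Phi_le_of_le_exp {x a : ℝ} (ha : 16 ≤ a) (hx0 : 0 ≤ x) (hx : x ≤ exp a) : Phi x ≤ a := by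
  nlinarith [Phi_sq_le ha hx0 hx, Phi_nonneg hx0]

lemma phi_le_one (x : ℝ) : phi x ≤ 1 :=
  exp_le_one_iff.2 (neg_nonpos.2 (sq_nonneg _))

lemma exp_neg_one_mul_exp_le_phi {x a : ℝ} (ha : 16 ≤ a) (hx0 : 0 ≤ x) (hx : x ≤ exp a) :
    exp (-1) * exp (-(3 / 2) * a) ≤ phi x := by
  rw [phi, ← exp_add, exp_le_exp]
  linarith [Phi_sq_le ha hx0 hx]

section Discretization

variable {n : ℕ} {ε : ℝ}

lemma one_le_floor_rpow (hn : 1 ≤ (n : ℝ) ^ ε) : (1 : ℝ) ≤ ⌊(n : ℝ) ^ ε⌋₊ := by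
  exact_mod_cast Nat.le_floor (by exact_mod_cast hn)

lemma del_pos (hn : 1 ≤ (n : ℝ) ^ ε) : 0 < del n ε :=
  one_div_pos.2 (zero_lt_one.trans_le (one_le_floor_rpow hn))

lemma del_le_one (hn : 1 ≤ (n : ℝ) ^ ε) : del n ε ≤ 1 :=
  div_le_one_of_le₀ (one_le_floor_rpow hn) (by positivity)

lemma rpow_neg_le_del (hn : 1 ≤ (n : ℝ) ^ ε) : (n : ℝ) ^ (-ε) ≤ del n ε := by
  rw [rpow_neg (Nat.cast_nonneg n), del, one_div]
  exact inv_anti₀ (zero_lt_one.trans_le (one_le_floor_rpow hn)) (Nat.floor_le (by linarith))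

lemma natCast_mul_del_le_rpow {i : ℕ} (hi : i ≤ Inat n ε) : i * del n ε ≤ (n : ℝ) ^ ε := by
  have hi' : (i : ℝ) ≤ ⌊(n : ℝ) ^ ε⌋₊ * ⌊(n : ℝ) ^ ε⌋₊ := by
    rw [← sq]; exact_mod_cast hi
  rw [del, mul_one_div]
  exact (div_le_of_le_mul₀ (Nat.cast_nonneg _) (Nat.cast_nonneg _) hi').trans
    (Nat.floor_le (by positivity))

end Discretization

/-- (Fact (i).) There is `c > 0` such that for all large `n`
and all `0 ≤ i ≤ I`: `φ(iδ) ≤ 1`, `φ(iδ) ≥ c·n^{-1.5ε}`, `Φ(iδ) ≤ ln n`, and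
`Φ(iδ) ≥ c·n^{-ε}` whenever `i ≥ 1`. -/
theorem fact_phi_Phi_bounds
    (ε : ℝ) (hε0 : 0 < ε) (hε1 : ε < 1 / 10 ^ 10) :
    ∃ c : ℝ, 0 < c ∧ ∃ N : ℕ, ∀ n ≥ N, ∀ i ≤ Inat n ε,
      phi (i * del n ε) ≤ 1 ∧
      c * (n : ℝ) ^ (-(1.5) * ε) ≤ phi (i * del n ε) ∧
      Phi (i * del n ε) ≤ Real.log n ∧
      (1 ≤ i → c * (n : ℝ) ^ (-ε) ≤ Phi (i * del n ε)) := by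
  refine ⟨exp (-1), exp_pos _, ⌈exp (16 / ε)⌉₊, fun n hN i hi => ?_⟩
  have hn : exp (16 / ε) ≤ n := (Nat.le_ceil _).trans (by exact_mod_cast hN)
  have hn0 : (0 : ℝ) < n := (exp_pos _).trans_le hn
  set a := ε * log n with ha_def
  have ha : 16 ≤ a := by
    rw [← div_le_iff₀' hε0]; exact (le_log_iff_exp_le hn0).2 hn
  have hpow : (n : ℝ) ^ ε = exp a := by rw [rpow_def_of_pos hn0, mul_comm]
  have hn1 : 1 ≤ (n : ℝ) ^ ε := hpow ▸ one_le_exp (by linarith)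
  have hx0 : 0 ≤ i * del n ε := mul_nonneg i.cast_nonneg (del_pos hn1).le
  have hx : i * del n ε ≤ exp a := hpow ▸ natCast_mul_del_le_rpow hi
  refine ⟨phi_le_one _, ?_, ?_, fun hi1 => ?_⟩
  · have hpow' : (n : ℝ) ^ (-(1.5) * ε) = exp (-(3 / 2) * a) := by
      rw [rpow_def_of_pos hn0, ha_def]; ring_nf
    rw [hpow']
    exact exp_neg_one_mul_exp_le_phi ha hx0 hx
  · have hε : ε ≤ 1 := by norm_num at hε1; linarith
    calc Phi (i * del n ε) ≤ a := Phi_le_of_le_exp ha hx0 hx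
      _ ≤ log n := mul_le_of_le_one_left (by nlinarith) hε
  · calc exp (-1) * (n : ℝ) ^ (-ε) ≤ exp (-1) * del n ε := by gcongr; exact rpow_neg_le_del hn1
      _ ≤ Phi (del n ε) := exp_neg_one_mul_le_Phi (del_pos hn1).le (del_le_one hn1)
      _ ≤ Phi (i * del n ε) := Phi_le_Phi (del_pos hn1).le
          (le_mul_of_one_le_left (del_pos hn1).le (by exact_mod_cast hi1))

end TF
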